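/- Let l and n be positive integers and i a non-negative integer with i ≤ n-1. Then n divides ∑_{k=i}^{n-1} (-1)^k (2k+1)^{2l-1} · C(k+i, 2i) · C(2i, i). -/

import Mathlib

open Finset

/-! Write `a i k = C(k+i, 2i) C(2i, i) = C(k+i, i) C(k, i)`. Then
`4 (i+1)² a (i+1) k = ((2k+1)² - (2i+1)²) a i k`, so the sum with exponent `2l+1` is an integer
combination of sums with exponent `2l-1` (and indices `i`, `i+1`); induction on `l`, for all `i`
at once, reduces everything to exponent `1`. There `(2k+1) a i k = g (k+1) + g k` for
`g k = (i+1) C(k+i, i) C(k, i+1)`, so the alternating sum telescopes to `±g n`, and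
`g n = n C(n+i, i) C(n-1, i)`. Terms with `k < i` vanish, so the sum may start at `0`. -/

def schmidtCoeff (i k : ℕ) : ℤ := (k + i).choose i * k.choose i

lemma choose_two_mul_mul_choose_eq_schmidtCoeff (k i : ℕ) :
    ((k + i).choose (2 * i) : ℤ) * (2 * i).choose i = schmidtCoeff i k := by
  have h := Nat.choose_mul (n := k + i) (k := 2 * i) (s := i) (by omega)
  rw [show k + i - i = k by omega, show 2 * i - i = i by omega] at h
  unfold schmidtCoeff
  exact_mod_cast h

lemma succ_mul_choose_succ_eq_sub_mul_choose (k i : ℕ) :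
    ((i + 1) * k.choose (i + 1) : ℤ) = ((k : ℤ) - i) * k.choose i := by
  rcases lt_or_ge k i with hk | hk
  · simp [Nat.choose_eq_zero_of_lt hk, Nat.choose_eq_zero_of_lt (Nat.lt_succ_of_lt hk)]
  · have h := Nat.choose_succ_right_eq k i
    rw [← Nat.cast_sub hk]
    exact_mod_cast (mul_comm _ _).trans (h.trans (mul_comm _ _))

lemma schmidtCoeff_succ (i k : ℕ) :
    4 * ((i : ℤ) + 1) ^ 2 * schmidtCoeff (i + 1) k
      = ((2 * (k : ℤ) + 1) ^ 2 - (2 * (i : ℤ) + 1) ^ 2) * schmidtCoeff i k := by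
  have h₁ : ((k + i + 1 : ℕ) : ℤ) * (k + i).choose i = (k + i + 1).choose (i + 1) * (i + 1) := by
    exact_mod_cast Nat.add_one_mul_choose_eq (k + i) i
  have h₂ := succ_mul_choose_succ_eq_sub_mul_choose k i
  unfold schmidtCoeff
  rw [show k + (i + 1) = k + i + 1 by omega]
  push_cast at h₁
  linear_combination (-4 * ((i : ℤ) + 1) * k.choose (i + 1)) * h₁
    + (4 * ((k : ℤ) + i + 1) * (k + i).choose i) * h₂

def schmidtPrimitive (i k : ℕ) : ℤ := (i + 1) * (k + i).choose i * k.choose (i + 1)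

lemma schmidtPrimitive_succ_add (i k : ℕ) :
    schmidtPrimitive i (k + 1) + schmidtPrimitive i k
      = (2 * (k : ℤ) + 1) * schmidtCoeff i k := by
  have h₁ : ((k + i).choose i : ℤ) * (k + i + 1 : ℕ) = (k + i + 1).choose i * (k + 1 : ℕ) := by
    have := Nat.choose_mul_succ_eq (k + i) i
    rw [show k + i + 1 - i = k + 1 by omega] at this
    exact_mod_cast this
  have h₂ : ((k + 1 : ℕ) : ℤ) * k.choose i = (k + 1).choose (i + 1) * (i + 1) := by
    exact_mod_cast Nat.add_one_mul_choose_eq k i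
  have h₃ := succ_mul_choose_succ_eq_sub_mul_choose k i
  unfold schmidtPrimitive schmidtCoeff
  rw [show k + 1 + i = k + i + 1 by omega]
  push_cast at h₁ h₂
  linear_combination (-k.choose i : ℤ) * h₁ - ((k + i + 1).choose i : ℤ) * h₂
    + ((k + i).choose i : ℤ) * h₃

lemma dvd_schmidtPrimitive (n i : ℕ) : (n : ℤ) ∣ schmidtPrimitive i n := by
  rcases n with _ | n
  · simp [schmidtPrimitive]
  · have h : ((n + 1 : ℕ) : ℤ) * n.choose i = (n + 1).choose (i + 1) * (i + 1) := by
      exact_mod_cast Nat.add_one_mul_choose_eq n i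
    refine ⟨(n + 1 + i).choose i * n.choose i, ?_⟩
    unfold schmidtPrimitive
    linear_combination (-((n + 1 + i).choose i : ℤ)) * h

lemma sum_range_alternating_mul_schmidtCoeff (n i : ℕ) :
    ∑ k ∈ range n, (-1 : ℤ) ^ k * (2 * (k : ℤ) + 1) * schmidtCoeff i k
      = -((-1) ^ n * schmidtPrimitive i n) := by
  have h₀ : schmidtPrimitive i 0 = 0 := by simp [schmidtPrimitive]
  have h := sum_range_sub' (fun k => (-1 : ℤ) ^ k * schmidtPrimitive i k) n
  simp only [h₀, mul_zero, zero_sub] at h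
  rw [← h]
  refine sum_congr rfl fun k _ => ?_
  rw [mul_assoc, ← schmidtPrimitive_succ_add, pow_succ]
  ring

lemma dvd_sum_range_alternating_odd_pow_mul_schmidtCoeff (n m i : ℕ) :
    (n : ℤ) ∣ ∑ k ∈ range n, (-1 : ℤ) ^ k * (2 * (k : ℤ) + 1) ^ (2 * m + 1) * schmidtCoeff i k := by
  induction m generalizing i with
  | zero =>
    simp only [mul_zero, zero_add, pow_one, sum_range_alternating_mul_schmidtCoeff]
    exact ((dvd_schmidtPrimitive n i).mul_left _).neg_right
  | succ m ih =>
    have h : ∑ k ∈ range n, (-1 : ℤ) ^ k * (2 * (k : ℤ) + 1) ^ (2 * (m + 1) + 1) * schmidtCoeff i k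
        = 4 * ((i : ℤ) + 1) ^ 2 * ∑ k ∈ range n,
            (-1 : ℤ) ^ k * (2 * (k : ℤ) + 1) ^ (2 * m + 1) * schmidtCoeff (i + 1) k
          + (2 * (i : ℤ) + 1) ^ 2 * ∑ k ∈ range n,
            (-1 : ℤ) ^ k * (2 * (k : ℤ) + 1) ^ (2 * m + 1) * schmidtCoeff i k := by
      rw [mul_sum, mul_sum, ← sum_add_distrib]
      refine sum_congr rfl fun k _ => ?_
      linear_combination (-(-1 : ℤ) ^ k * (2 * (k : ℤ) + 1) ^ (2 * m + 1)) * schmidtCoeff_succ i k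
    rw [h]
    exact dvd_add ((ih (i + 1)).mul_left _) ((ih i).mul_left _)

theorem stmt_8_general (l n : ℕ) (hl : 0 < l) (i : ℕ) :
    (n : ℤ) ∣ ∑ k ∈ Finset.Ico i n,
        (-1 : ℤ) ^ k * (2 * (k : ℤ) + 1) ^ (2 * l - 1) *
          ((k + i).choose (2 * i) : ℤ) * ((2 * i).choose i : ℤ) := by
  obtain ⟨m, rfl⟩ : ∃ m, l = m + 1 := ⟨l - 1, by omega⟩
  rw [show 2 * (m + 1) - 1 = 2 * m + 1 by omega]
  have h : ∑ k ∈ Ico i n, (-1 : ℤ) ^ k * (2 * (k : ℤ) + 1) ^ (2 * m + 1) *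
        ((k + i).choose (2 * i) : ℤ) * ((2 * i).choose i : ℤ)
      = ∑ k ∈ range n, (-1 : ℤ) ^ k * (2 * (k : ℤ) + 1) ^ (2 * m + 1) * schmidtCoeff i k := by
    simp only [mul_assoc, ← choose_two_mul_mul_choose_eq_schmidtCoeff]
    refine sum_subset (fun k hk => mem_range.2 (mem_Ico.1 hk).2) fun k hk hk' => ?_
    have hki : k < i := by simp_all
    simp [Nat.choose_eq_zero_of_lt (show k + i < 2 * i by omega)]
  rw [h]
  exact dvd_sum_range_alternating_odd_pow_mul_schmidtCoeff n m i

theorem stmt_8 (l n : ℕ) (hl : 0 < l) (hn : 0 < n) (i : ℕ) (hi : i ≤ n - 1) :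
    (n : ℤ) ∣ ∑ k ∈ Finset.Ico i n,
        (-1 : ℤ) ^ k * (2 * (k : ℤ) + 1) ^ (2 * l - 1) *
          ((k + i).choose (2 * i) : ℤ) * ((2 * i).choose i : ℤ) :=
  stmt_8_general l n hl i
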